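/- Under the bounded support assumption, for every t > 0, every R > 0 and every y ∈ ℝ^d with ‖y‖_∞ ≤ R, the drift satisfies ‖ b(t, y) ‖ ≤ √d (R + 1) / (1 − e^{-t}). -/

import Mathlib

open MeasureTheory Real InnerProductSpace

/-- The density `p_t(y) = ∫ (2π σ_t²)^{-d/2} exp(−‖y − μ_t y₀‖²/(2σ_t²)) p₀(dy₀)` of
`Y_t = e^{-t} Y₀ + √(1 − e^{-2t}) Z` where `Y₀ ~ p₀`. -/
noncomputable def pt (d : ℕ) (p₀ : Measure (EuclideanSpace ℝ (Fin d))) (t : ℝ)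
    (y : EuclideanSpace ℝ (Fin d)) : ℝ :=
  ∫ y₀, (2 * π * (1 - Real.exp (-2 * t))) ^ (-(d : ℝ) / 2) *
      Real.exp (-‖y - Real.exp (-t) • y₀‖ ^ 2 / (2 * (1 - Real.exp (-2 * t)))) ∂p₀

/-- The drift `b(t, y) = y + 2 ∇_y log p_t(y)`. -/
noncomputable def drift (d : ℕ) (p₀ : Measure (EuclideanSpace ℝ (Fin d))) (t : ℝ)
    (y : EuclideanSpace ℝ (Fin d)) : EuclideanSpace ℝ (Fin d) :=
  y + (2 : ℝ) • gradient (fun z => Real.log (pt d p₀ t z)) y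

/-- The sup norm `‖y‖_∞ = max_i |y_i|` on `ℝ^d`. -/
noncomputable def supNorm {d : ℕ} (y : EuclideanSpace ℝ (Fin d)) : ℝ :=
  ‖(fun i => y i : Fin d → ℝ)‖

/-! ### Auxiliary definitions and lemmas -/

/-- The Gaussian kernel appearing in `pt`, without the normalizing constant. -/
noncomputable def ff (d : ℕ) (t : ℝ) (x a : EuclideanSpace ℝ (Fin d)) : ℝ :=
  Real.exp (-‖x - Real.exp (-t) • a‖ ^ 2 / (2 * (1 - Real.exp (-2 * t))))

theorem s_pos {t : ℝ} (ht : 0 < t) : 0 < 1 - Real.exp (-2 * t) := by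
  have := Real.exp_lt_one_iff.mpr (by linarith : -2 * t < 0); linarith

theorem ff_cont (d : ℕ) (t : ℝ) (x : EuclideanSpace ℝ (Fin d)) :
    Continuous (fun a => ff d t x a) := by unfold ff; fun_prop

theorem ff_pos (d : ℕ) (t : ℝ) (x a : EuclideanSpace ℝ (Fin d)) : 0 < ff d t x a :=
  Real.exp_pos _

theorem ff_le_one (d : ℕ) {t : ℝ} (ht : 0 < t) (x a : EuclideanSpace ℝ (Fin d)) :
    ff d t x a ≤ 1 := by
  have hs := s_pos ht
  exact Real.exp_le_one_iff.mpr
    (div_nonpos_of_nonpos_of_nonneg (neg_nonpos.mpr (by positivity)) (by linarith))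

theorem integrable_ff (d : ℕ) {t : ℝ} (ht : 0 < t)
    (p₀ : Measure (EuclideanSpace ℝ (Fin d))) [IsProbabilityMeasure p₀]
    (x : EuclideanSpace ℝ (Fin d)) : Integrable (fun a => ff d t x a) p₀ := by
  refine (integrable_const (1 : ℝ)).mono' (ff_cont d t x).aestronglyMeasurable ?_
  filter_upwards with a
  rw [Real.norm_eq_abs, abs_of_pos (ff_pos d t x a)]
  exact ff_le_one d ht x a

theorem gg_pos (d : ℕ) {t : ℝ} (ht : 0 < t)
    (p₀ : Measure (EuclideanSpace ℝ (Fin d))) [IsProbabilityMeasure p₀]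
    (x : EuclideanSpace ℝ (Fin d)) : 0 < ∫ a, ff d t x a ∂p₀ := by
  rw [integral_pos_iff_support_of_nonneg_ae
    (Filter.Eventually.of_forall fun a => (ff_pos d t x a).le) (integrable_ff d ht p₀ x)]
  have : (Function.support fun a => ff d t x a) = Set.univ := by
    ext a; simp [Function.mem_support, (ff_pos d t x a).ne']
  rw [this]
  simp

theorem hasFDerivAt_ff (d : ℕ) {t : ℝ} (ht : 0 < t) (x a : EuclideanSpace ℝ (Fin d)) :
    HasFDerivAt (fun z => ff d t z a)
      ((toDual ℝ (EuclideanSpace ℝ (Fin d)))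
        ((ff d t x a / (1 - Real.exp (-2 * t))) • (Real.exp (-t) • a - x))) x := by
  have hs := s_pos ht
  set s := 1 - Real.exp (-2 * t) with hsdef
  set c := Real.exp (-t) • a with hcdef
  have h1 : HasFDerivAt (fun z : EuclideanSpace ℝ (Fin d) => z - c)
      (ContinuousLinearMap.id ℝ _) x := (hasFDerivAt_id x).sub_const c
  have h2 := h1.norm_sq
  have h3 : HasFDerivAt (fun z : EuclideanSpace ℝ (Fin d) => -‖z - c‖ ^ 2 / (2 * s))
      ((-(2 * s)⁻¹) • (2 • (innerSL ℝ (x - c)).comp (ContinuousLinearMap.id ℝ _))) x := by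
    have := h2.const_mul (-(2 * s)⁻¹)
    have e : (fun z : EuclideanSpace ℝ (Fin d) => -‖z - c‖ ^ 2 / (2 * s))
        = fun y => -(2 * s)⁻¹ * ‖y - c‖ ^ 2 := by
      funext z; ring
    rw [e]; exact this
  have h4 := (Real.hasDerivAt_exp (-‖x - c‖ ^ 2 / (2 * s))).comp_hasFDerivAt x h3
  refine h4.congr_fderiv ?_
  symm
  ext v
  show (toDual ℝ (EuclideanSpace ℝ (Fin d))) ((ff d t x a / s) • (c - x)) v = _
  have hff : ff d t x a = Real.exp (-‖x - c‖ ^ 2 / (2 * s)) := rfl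
  simp only [ContinuousLinearMap.smul_apply, ContinuousLinearMap.coe_smul', Pi.smul_apply,
    ContinuousLinearMap.coe_comp', Function.comp_apply, ContinuousLinearMap.coe_id', id_eq,
    innerSL_apply_apply, toDual_apply_apply, smul_eq_mul, nsmul_eq_mul, Nat.cast_ofNat, hff]
  rw [real_inner_smul_left, inner_sub_left, inner_sub_left]
  field_simp
  ring

theorem norm_le_sqrt_d (d : ℕ) (a : EuclideanSpace ℝ (Fin d))
    (ha : ∀ i, a i ∈ Set.Icc (0:ℝ) 1) : ‖a‖ ≤ Real.sqrt d := by
  rw [EuclideanSpace.norm_eq]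
  apply Real.sqrt_le_sqrt
  calc ∑ i, ‖a i‖ ^ 2 ≤ ∑ _i : Fin d, 1 := by
        apply Finset.sum_le_sum
        intro i _
        have h := ha i
        rw [Real.norm_eq_abs, sq_abs]
        nlinarith [h.1, h.2]
    _ = d := by simp

theorem integrable_vec (d : ℕ) {t : ℝ} (ht : 0 < t)
    (p₀ : Measure (EuclideanSpace ℝ (Fin d))) [IsProbabilityMeasure p₀]
    (hsupp : ∀ᵐ y₀ ∂p₀, ∀ i, y₀ i ∈ Set.Icc (0 : ℝ) 1)
    (x : EuclideanSpace ℝ (Fin d)) :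
    Integrable (fun a => (ff d t x a / (1 - Real.exp (-2 * t))) •
      (Real.exp (-t) • a - x)) p₀ := by
  have hs := s_pos ht
  refine (integrable_const ((Real.sqrt d + ‖x‖) / (1 - Real.exp (-2 * t)))).mono' ?_ ?_
  · apply Continuous.aestronglyMeasurable
    have := ff_cont d t x
    fun_prop
  · filter_upwards [hsupp] with a ha
    rw [norm_smul]
    have h1 : ‖Real.exp (-t) • a - x‖ ≤ Real.sqrt d + ‖x‖ := by
      calc ‖Real.exp (-t) • a - x‖ ≤ ‖Real.exp (-t) • a‖ + ‖x‖ := norm_sub_le _ _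
        _ ≤ Real.sqrt d + ‖x‖ := by
            rw [norm_smul, Real.norm_eq_abs, abs_of_pos (Real.exp_pos _)]
            have h2 := norm_le_sqrt_d d a ha
            have h3 := Real.exp_le_one_iff.mpr (by linarith : -t ≤ 0)
            have h4 : (0:ℝ) ≤ ‖a‖ := norm_nonneg _
            nlinarith [Real.exp_pos (-t)]
    have h5 : ‖ff d t x a / (1 - Real.exp (-2 * t))‖ ≤ (1 - Real.exp (-2 * t))⁻¹ := by
      rw [Real.norm_eq_abs, abs_div, abs_of_pos (ff_pos d t x a), abs_of_pos hs,
        div_le_iff₀ hs, inv_mul_cancel₀ hs.ne']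
      exact ff_le_one d ht x a
    calc ‖ff d t x a / (1 - Real.exp (-2 * t))‖ * ‖Real.exp (-t) • a - x‖
        ≤ (1 - Real.exp (-2 * t))⁻¹ * (Real.sqrt d + ‖x‖) := by
          apply mul_le_mul h5 h1 (norm_nonneg _) (by positivity)
      _ = (Real.sqrt d + ‖x‖) / (1 - Real.exp (-2 * t)) := by ring

theorem hasGradientAt_gg (d : ℕ) {t : ℝ} (ht : 0 < t)
    (p₀ : Measure (EuclideanSpace ℝ (Fin d))) [IsProbabilityMeasure p₀]
    (hsupp : ∀ᵐ y₀ ∂p₀, ∀ i, y₀ i ∈ Set.Icc (0 : ℝ) 1)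
    (y : EuclideanSpace ℝ (Fin d)) :
    HasGradientAt (fun z => ∫ a, ff d t z a ∂p₀)
      (∫ a, (ff d t y a / (1 - Real.exp (-2 * t))) • (Real.exp (-t) • a - y) ∂p₀) y := by
  have hs := s_pos ht
  rw [hasGradientAt_iff_hasFDerivAt]
  have key := hasFDerivAt_integral_of_dominated_of_fderiv_le
    (F := fun x a => ff d t x a)
    (F' := fun x a => (toDual ℝ (EuclideanSpace ℝ (Fin d)))
      ((ff d t x a / (1 - Real.exp (-2 * t))) • (Real.exp (-t) • a - x)))
    (x₀ := y) (bound := fun _ => (Real.sqrt d + (‖y‖ + 1)) / (1 - Real.exp (-2 * t)))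
    (μ := p₀) (s := Metric.ball y 1) (Metric.ball_mem_nhds y one_pos)
    (Filter.Eventually.of_forall fun x => (ff_cont d t x).aestronglyMeasurable)
    (integrable_ff d ht p₀ y)
    ?_ ?_ (integrable_const _)
    (Filter.Eventually.of_forall fun a => fun x _ => hasFDerivAt_ff d ht x a)
  · have hcomm : ∫ a, (toDual ℝ (EuclideanSpace ℝ (Fin d)))
        ((ff d t y a / (1 - Real.exp (-2 * t))) • (Real.exp (-t) • a - y)) ∂p₀
        = (toDual ℝ (EuclideanSpace ℝ (Fin d)))
          (∫ a, (ff d t y a / (1 - Real.exp (-2 * t))) • (Real.exp (-t) • a - y) ∂p₀) :=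
      ((toDual ℝ (EuclideanSpace ℝ (Fin d))).toContinuousLinearEquiv.toContinuousLinearMap).integral_comp_comm
        (integrable_vec d ht p₀ hsupp y)
    rw [← hcomm]
    exact key
  · apply Continuous.aestronglyMeasurable
    apply ((toDual ℝ (EuclideanSpace ℝ (Fin d))).continuous).comp
    have := ff_cont d t y
    fun_prop
  · filter_upwards [hsupp] with a ha x hx
    rw [LinearIsometryEquiv.norm_map, norm_smul]
    have h1 : ‖Real.exp (-t) • a - x‖ ≤ Real.sqrt d + (‖y‖ + 1) := by
      calc ‖Real.exp (-t) • a - x‖ ≤ ‖Real.exp (-t) • a‖ + ‖x‖ := norm_sub_le _ _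
        _ ≤ Real.sqrt d + (‖y‖ + 1) := by
            have hxy : ‖x‖ ≤ ‖y‖ + 1 := by
              have h6 := mem_ball_iff_norm.mp hx
              have h7 : ‖x‖ - ‖y‖ ≤ ‖x - y‖ := norm_sub_norm_le x y
              linarith
            rw [norm_smul, Real.norm_eq_abs, abs_of_pos (Real.exp_pos _)]
            have h2 := norm_le_sqrt_d d a ha
            have h3 := Real.exp_le_one_iff.mpr (by linarith : -t ≤ 0)
            have h4 : (0:ℝ) ≤ ‖a‖ := norm_nonneg _
            nlinarith [Real.exp_pos (-t)]
    have h5 : ‖ff d t x a / (1 - Real.exp (-2 * t))‖ ≤ (1 - Real.exp (-2 * t))⁻¹ := by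
      rw [Real.norm_eq_abs, abs_div, abs_of_pos (ff_pos d t x a), abs_of_pos hs,
        div_le_iff₀ hs, inv_mul_cancel₀ hs.ne']
      exact ff_le_one d ht x a
    calc ‖ff d t x a / (1 - Real.exp (-2 * t))‖ * ‖Real.exp (-t) • a - x‖
        ≤ (1 - Real.exp (-2 * t))⁻¹ * (Real.sqrt d + (‖y‖ + 1)) := by
          apply mul_le_mul h5 h1 (norm_nonneg _) (by positivity)
      _ = (Real.sqrt d + (‖y‖ + 1)) / (1 - Real.exp (-2 * t)) := by ring

theorem gradient_log_pt (d : ℕ) {t : ℝ} (ht : 0 < t)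
    (p₀ : Measure (EuclideanSpace ℝ (Fin d))) [IsProbabilityMeasure p₀]
    (hsupp : ∀ᵐ y₀ ∂p₀, ∀ i, y₀ i ∈ Set.Icc (0 : ℝ) 1)
    (y : EuclideanSpace ℝ (Fin d)) :
    gradient (fun z => Real.log (pt d p₀ t z)) y
      = (∫ a, ff d t y a ∂p₀)⁻¹ •
        ∫ a, (ff d t y a / (1 - Real.exp (-2 * t))) • (Real.exp (-t) • a - y) ∂p₀ := by
  have hs := s_pos ht
  have hC : 0 < (2 * π * (1 - Real.exp (-2 * t))) ^ (-(d:ℝ)/2) :=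
    Real.rpow_pos_of_pos (mul_pos (by positivity) hs) _
  have hpt : ∀ z : EuclideanSpace ℝ (Fin d), pt d p₀ t z
      = (2 * π * (1 - Real.exp (-2 * t))) ^ (-(d:ℝ)/2) * ∫ a, ff d t z a ∂p₀ :=
    fun z => integral_const_mul _ _
  apply HasGradientAt.gradient
  have hgg := hasGradientAt_gg d ht p₀ hsupp y
  have hFD := hasGradientAt_iff_hasFDerivAt.mp hgg
  have hlog : HasFDerivAt (fun z => Real.log (∫ a, ff d t z a ∂p₀))
      ((toDual ℝ (EuclideanSpace ℝ (Fin d))) ((∫ a, ff d t y a ∂p₀)⁻¹ •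
        ∫ a, (ff d t y a / (1 - Real.exp (-2 * t))) • (Real.exp (-t) • a - y) ∂p₀)) y := by
    have h := (Real.hasDerivAt_log (gg_pos d ht p₀ y).ne').comp_hasFDerivAt y hFD
    refine h.congr_fderiv ?_
    simp [_root_.map_smul]
  rw [hasGradientAt_iff_hasFDerivAt]
  have heq : (fun z => Real.log (pt d p₀ t z))
      = fun z => Real.log ((2 * π * (1 - Real.exp (-2 * t))) ^ (-(d:ℝ)/2))
          + Real.log (∫ a, ff d t z a ∂p₀) := by
    funext z
    rw [hpt z, Real.log_mul hC.ne' (gg_pos d ht p₀ z).ne']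
  rw [heq]
  simpa using hlog.const_add (Real.log ((2 * π * (1 - Real.exp (-2 * t))) ^ (-(d:ℝ)/2)))

theorem core_ineq (m s u q R : ℝ) (hm0 : 0 < m) (hm1 : m < 1) (hs : s = 1 - m^2)
    (hu1 : -R ≤ u) (hu2 : u ≤ R) (hq0 : 0 ≤ q) (hq1 : q ≤ 1) (hR : 0 < R) :
    |u + (2/s) * (m*q - u)| ≤ (R+1)/(1-m) := by
  have hs' : 0 < s := by nlinarith
  have hm' : 0 < 1 - m := by linarith
  have key : u + (2/s) * (m*q - u) = (u*s + 2*(m*q-u))/s := by field_simp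
  rw [key, abs_le]
  constructor
  · rw [show -((R+1)/(1-m)) = (-(R+1))/(1-m) by ring, div_le_div_iff₀ hm' hs']
    nlinarith [mul_nonneg (mul_pos hm0 hm').le hq0,
      mul_nonneg (mul_nonneg hm'.le (by positivity : (0:ℝ) ≤ 1 + m^2)) (by linarith : (0:ℝ) ≤ R - u),
      mul_nonneg hm'.le (by nlinarith [mul_pos (mul_pos hR hm0) hm'] : (0:ℝ) ≤ R*m*(1-m) + 1 + m)]
  · rw [div_le_div_iff₀ hs' hm']
    nlinarith [mul_nonneg (mul_pos hm0 hm').le (by linarith : (0:ℝ) ≤ 1 - q),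
      mul_nonneg (mul_nonneg hm'.le (by positivity : (0:ℝ) ≤ 1 + m^2)) (by linarith : (0:ℝ) ≤ u + R),
      mul_nonneg (sq_nonneg (1-m)) (by nlinarith [mul_pos hR hm0] : (0:ℝ) ≤ R*m + 1)]

/-- Under the bounded support assumption, for every `t > 0`, `R > 0` and `y` with
`‖y‖_∞ ≤ R`, the drift satisfies `‖b(t, y)‖ ≤ √d (R + 1)/(1 − e^{-t})`. -/
theorem drift_pointwise_bound (d : ℕ) (hd : 1 ≤ d)
    (p₀ : Measure (EuclideanSpace ℝ (Fin d))) [IsProbabilityMeasure p₀]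
    (hsupp : ∀ᵐ y₀ ∂p₀, ∀ i, y₀ i ∈ Set.Icc (0 : ℝ) 1)
    (t : ℝ) (ht : 0 < t) (R : ℝ) (hR : 0 < R)
    (y : EuclideanSpace ℝ (Fin d)) (hy : supNorm y ≤ R) :
    ‖drift d p₀ t y‖ ≤ Real.sqrt d * (R + 1) / (1 - Real.exp (-t)) := by
  have hs := s_pos ht
  have hm0 : 0 < Real.exp (-t) := Real.exp_pos _
  have hm1 : Real.exp (-t) < 1 := Real.exp_lt_one_iff.mpr (by linarith)
  have hs2 : 1 - Real.exp (-2 * t) = 1 - Real.exp (-t) ^ 2 := by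
    rw [show (-2) * t = -t + -t by ring, Real.exp_add]; ring
  set m := Real.exp (-t) with hm
  set s := 1 - Real.exp (-2 * t) with hsdef
  have hI : 0 < ∫ a, ff d t y a ∂p₀ := gg_pos d ht p₀ y
  set I := ∫ a, ff d t y a ∂p₀ with hIdef
  set G := ∫ a, (ff d t y a / s) • (m • a - y) ∂p₀ with hGdef
  have hdrift : drift d p₀ t y = y + (2:ℝ) • (I⁻¹ • G) := by
    rw [drift, gradient_log_pt d ht p₀ hsupp y]
  have hB : (0:ℝ) ≤ (R + 1)/(1 - m) := div_nonneg (by linarith) (by linarith)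
  -- componentwise bound
  have hcomp : ∀ i, |(drift d p₀ t y) i| ≤ (R + 1)/(1 - m) := by
    intro i
    -- integrability of coordinate integrand
    have hint1 : Integrable (fun a => ff d t y a * a i) p₀ := by
      refine (integrable_const (1 : ℝ)).mono' ?_ ?_
      · exact ((ff_cont d t y).mul (EuclideanSpace.proj (𝕜 := ℝ) i).continuous).aestronglyMeasurable
      · filter_upwards [hsupp] with a ha
        have h1 := (ha i).1
        have h2 := (ha i).2
        have h3 := ff_pos d t y a
        have h4 := ff_le_one d ht y a
        rw [Real.norm_eq_abs, abs_mul, abs_of_pos h3, abs_of_nonneg h1]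
        nlinarith
    set J := ∫ a, ff d t y a * a i ∂p₀ with hJdef
    have hJ0 : 0 ≤ J := by
      apply integral_nonneg_of_ae
      filter_upwards [hsupp] with a ha
      exact mul_nonneg (ff_pos d t y a).le (ha i).1
    have hJI : J ≤ I := by
      apply integral_mono_ae hint1 (integrable_ff d ht p₀ y)
      filter_upwards [hsupp] with a ha
      nlinarith [(ha i).2, (ff_pos d t y a).le]
    -- coordinate of G
    have hGi : G i = (m/s) * J - (y i/s) * I := by
      have hproj := (EuclideanSpace.proj (𝕜 := ℝ) i).integral_comp_comm
        (integrable_vec d ht p₀ hsupp y)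
      have hGi1 : G i = ∫ a, (ff d t y a / s) * (m * a i - y i) ∂p₀ := by
        rw [hGdef]
        rw [show ((∫ a, (ff d t y a / s) • (m • a - y) ∂p₀) i)
            = EuclideanSpace.proj (𝕜 := ℝ) i (∫ a, (ff d t y a / s) • (m • a - y) ∂p₀) from rfl,
          ← hproj]
        rfl
      rw [hGi1]
      have heq2 : (fun a => (ff d t y a / s) * (m * a i - y i))
          = fun a => (m/s) * (ff d t y a * a i) - (y i/s) * (ff d t y a) := by
        funext a; field_simp
      rw [heq2, integral_sub (hint1.const_mul _) ((integrable_ff d ht p₀ y).const_mul _),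
        integral_const_mul, integral_const_mul]
    have happ : (drift d p₀ t y) i = y i + 2 * (I⁻¹ * (G i)) := by
      rw [hdrift]
      simp [PiLp.add_apply, PiLp.smul_apply, smul_eq_mul]
    have hval : (drift d p₀ t y) i = y i + (2/s) * (m * (J/I) - y i) := by
      rw [happ, hGi]
      field_simp
    rw [hval]
    have hu : |y i| ≤ R := by
      have := norm_le_pi_norm (fun j => y j : Fin d → ℝ) i
      rw [Real.norm_eq_abs] at this
      calc |y i| ≤ supNorm y := this
        _ ≤ R := hy
    rw [abs_le] at hu
    exact core_ineq m s (y i) (J/I) R hm0 hm1 hs2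
      hu.1 hu.2 (div_nonneg hJ0 hI.le) ((div_le_one hI).mpr hJI) hR
  -- from coordinates to the Euclidean norm
  have hnorm : ‖drift d p₀ t y‖ ≤ Real.sqrt d * ((R + 1)/(1 - m)) := by
    rw [EuclideanSpace.norm_eq]
    have hsum : ∑ i, ‖(drift d p₀ t y) i‖ ^ 2 ≤ (d : ℝ) * ((R + 1)/(1 - m))^2 := by
      calc ∑ i, ‖(drift d p₀ t y) i‖ ^ 2 ≤ ∑ _i : Fin d, ((R + 1)/(1 - m))^2 := by
            apply Finset.sum_le_sum
            intro i _
            rw [Real.norm_eq_abs]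
            have := hcomp i
            nlinarith [abs_nonneg ((drift d p₀ t y) i)]
        _ = (d : ℝ) * ((R + 1)/(1 - m))^2 := by
            rw [Finset.sum_const, Finset.card_univ, Fintype.card_fin, nsmul_eq_mul]
    calc Real.sqrt (∑ i, ‖(drift d p₀ t y) i‖ ^ 2)
        ≤ Real.sqrt ((d : ℝ) * ((R + 1)/(1 - m))^2) := Real.sqrt_le_sqrt hsum
      _ = Real.sqrt d * ((R + 1)/(1 - m)) := by
          rw [Real.sqrt_mul (Nat.cast_nonneg d), Real.sqrt_sq hB]
  calc ‖drift d p₀ t y‖ ≤ Real.sqrt d * ((R + 1)/(1 - m)) := hnorm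
    _ = Real.sqrt d * (R + 1) / (1 - m) := by rw [mul_div_assoc]
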